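/- Let f : ℝ² → ℝ be a smooth G-invariant function (f(p+nq,q) = f(p,q) for all n ∈ ℤ). Then f = h + g where h(p,q) = f(0,q) depends only on q, and g is a smooth G-invariant function that vanishes together with all its partial derivatives at every point of the line q = 0. -/

import Mathlib

/-!
Put `g(p, q) = f(p, q) - f(0, q)`. For fixed `q ≠ 0` the function `p ↦ g(p, q)` is
`|q|`-periodic and vanishes at `0`, so by Rolle each of its `p`-derivatives vanishes somewhere
in every period; descending from a bound on `∂ₚᴷ g` over a compact square gives
`|g(p, q)| ≤ C_K |q|^K`. Bounds `F = O(|q|^K)` for all `K` pass from `F` to `DF` near the line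
`q = 0` through the interpolation inequality `‖DF‖ ≤ 2 sup ‖F‖ / r + r sup ‖D²F‖` on balls of
radius `r ≈ |q|^(K+1)`, and an iterated derivative that is `O(|q|)` near `(p, 0)` vanishes there.
-/

open Set Filter Topology Metric Asymptotics
open scoped ContDiff

def IsFlatAlong {E G : Type*} [TopologicalSpace E] [NormedAddCommGroup G] (w : E → ℝ)
    (F : E → G) (x₀ : E) : Prop :=
  ∀ K : ℕ, F =O[𝓝[{x | w x ≠ 0}] x₀] fun x => w x ^ K

theorem IsFlatAlong.eq_zero {E G : Type*} [TopologicalSpace E] [NormedAddCommGroup G]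
    {w : E → ℝ} {F : E → G} {x₀ : E} (h : IsFlatAlong w F x₀) (hF : ContinuousAt F x₀)
    (hw : ContinuousAt w x₀) (hw₀ : w x₀ = 0) (hx₀ : x₀ ∈ closure {x | w x ≠ 0}) :
    F x₀ = 0 := by
  have := mem_closure_iff_nhdsWithin_neBot.1 hx₀
  have hw1 : Tendsto (fun x => w x ^ 1) (𝓝[{x | w x ≠ 0}] x₀) (𝓝 0) := by
    simpa [hw₀] using hw.tendsto.mono_left nhdsWithin_le_nhds
  exact tendsto_nhds_unique (hF.tendsto.mono_left nhdsWithin_le_nhds) ((h 1).trans_tendsto hw1)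

section Flatness

variable {E G : Type*} [NormedAddCommGroup E] [NormedSpace ℝ E] [NormedAddCommGroup G]
  [NormedSpace ℝ G]

theorem norm_fderiv_le_of_norm_le_of_norm_fderiv_fderiv_le {F : E → G} (hF : ContDiff ℝ 2 F)
    {x : E} {r A M : ℝ} (hr : 0 < r) (hA : ∀ y ∈ closedBall x r, ‖F y‖ ≤ A)
    (hM : ∀ y ∈ closedBall x r, ‖fderiv ℝ (fderiv ℝ F) y‖ ≤ M) :
    ‖fderiv ℝ F x‖ ≤ 2 * A / r + M * r := by
  have hx : x ∈ closedBall x r := mem_closedBall_self hr.le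
  have hA₀ : 0 ≤ A := (norm_nonneg _).trans (hA x hx)
  have hM₀ : 0 ≤ M := le_trans (by positivity) (hM x hx)
  have hDF : ∀ y ∈ closedBall x r, ‖fderiv ℝ F y - fderiv ℝ F x‖ ≤ M * r := fun y hy =>
    calc ‖fderiv ℝ F y - fderiv ℝ F x‖ ≤ M * ‖y - x‖ :=
          (convex_closedBall x r).norm_image_sub_le_of_norm_fderiv_le
            (fun z _ => (hF.fderiv_right (m := 1) le_rfl).differentiable one_ne_zero z) hM hx hy
      _ ≤ M * r := by gcongr; rwa [← dist_eq_norm]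
  refine ContinuousLinearMap.opNorm_le_of_unit_norm (by positivity) fun v hv => ?_
  set y := x + r • v
  have hy : y ∈ closedBall x r := by simp [y, norm_smul, hv, abs_of_pos hr]
  have htaylor : ‖F y - F x - fderiv ℝ F x (r • v)‖ ≤ M * r * r := by
    simpa [y, norm_smul, hv, abs_of_pos hr] using
      (convex_closedBall x r).norm_image_sub_le_of_norm_fderiv_le'
        (fun z _ => hF.differentiable two_ne_zero z) hDF hx hy
  have hsum : r * ‖fderiv ℝ F x v‖ ≤ 2 * A + M * r * r :=
    calc r * ‖fderiv ℝ F x v‖ = ‖(F y - F x) - (F y - F x - fderiv ℝ F x (r • v))‖ := by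
          rw [sub_sub_cancel, map_smul, norm_smul, Real.norm_of_nonneg hr.le]
      _ ≤ ‖F y‖ + ‖F x‖ + ‖F y - F x - fderiv ℝ F x (r • v)‖ := by
          grw [norm_sub_le, norm_sub_le]
      _ ≤ 2 * A + M * r * r := by linarith [hA y hy, hA x hx]
  rw [div_add' _ _ _ hr.ne', le_div_iff₀ hr]
  linarith

theorem norm_fderiv_le_mul_pow_of_norm_le_mul_pow {F : E → G} {w : E → ℝ} (hF : ContDiff ℝ 2 F)
    (hw : LipschitzWith 1 w) {y : E} {K : ℕ} {C M : ℝ} (hC : 0 ≤ C) (hwy : w y ≠ 0)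
    (hwy1 : |w y| ≤ 1)
    (hA : ∀ z ∈ closedBall y (|w y| / 2), w z ≠ 0 → ‖F z‖ ≤ C * |w z| ^ (2 * K + 2))
    (hM : ∀ z ∈ closedBall y (|w y| / 2), ‖fderiv ℝ (fderiv ℝ F) z‖ ≤ M) :
    ‖fderiv ℝ F y‖ ≤ (2 ^ (2 * K + 4) * C + M) * |w y| ^ K := by
  set a := |w y|
  have ha : 0 < a := abs_pos.2 hwy
  -- This radius balances `2 sup ‖F‖ / r ≈ a ^ (2K+2) / r` against `M r`.
  set r := a ^ (K + 1) / 2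
  have hr : 0 < r := by positivity
  have hra : closedBall y r ⊆ closedBall y (a / 2) := by
    refine closedBall_subset_closedBall ?_
    have := pow_le_pow_of_le_one ha.le hwy1 (Nat.le_add_left 1 K)
    simp only [r, pow_one] at this ⊢
    linarith
  have hwz : ∀ z ∈ closedBall y (a / 2), w z ≠ 0 ∧ |w z| ≤ 2 * a := by
    intro z hz
    have hzy : |w z - w y| ≤ a / 2 := by
      simpa [Real.dist_eq] using (hw.dist_le_mul z y).trans (by simpa using hz)
    have := abs_sub_abs_le_abs_sub (w z) (w y)
    exact ⟨fun h0 => by rw [h0, zero_sub, abs_neg] at hzy; linarith, by linarith⟩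
  have hbound := norm_fderiv_le_of_norm_le_of_norm_fderiv_fderiv_le hF hr
    (A := C * (2 * a) ^ (2 * K + 2)) (M := M)
    (fun z hz => (hA z (hra hz) (hwz z (hra hz)).1).trans (by gcongr; exact (hwz z (hra hz)).2))
    (fun z hz => hM z (hra hz))
  have hM₀ : 0 ≤ M := le_trans (by positivity) (hM y (mem_closedBall_self (by positivity)))
  calc ‖fderiv ℝ F y‖ ≤ 2 * (C * (2 * a) ^ (2 * K + 2)) / r + M * r := hbound
    _ = (2 ^ (2 * K + 4) * C + M / 2) * a ^ (K + 1) := by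
        simp only [r]; field_simp; ring
    _ ≤ (2 ^ (2 * K + 4) * C + M) * a ^ K := by
        gcongr ?_ * ?_
        · linarith
        · exact pow_le_pow_of_le_one ha.le hwy1 (Nat.le_succ K)

theorem isFlatAlong_fderiv {w : E → ℝ} {F : E → G} {x₀ : E} (h : IsFlatAlong w F x₀)
    (hw : LipschitzWith 1 w) (hw₀ : w x₀ = 0) (hF : ContDiff ℝ 2 F) :
    IsFlatAlong w (fderiv ℝ F) x₀ := by
  intro K
  obtain ⟨C, hC, hFC⟩ := (h (2 * K + 2)).exists_pos
  set M := ‖fderiv ℝ (fderiv ℝ F) x₀‖ + 1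
  have hF2 : ∀ᶠ y in 𝓝 x₀, ‖fderiv ℝ (fderiv ℝ F) y‖ < M :=
    ((hF.fderiv_right (m := 1) le_rfl).continuous_fderiv one_ne_zero).norm.continuousAt
      |>.eventually_lt continuousAt_const (lt_add_one _)
  obtain ⟨ε, hε, hball⟩ :=
    eventually_nhds_iff_ball.1 ((eventually_nhdsWithin_iff.1 hFC.bound).and hF2)
  have hwx : ∀ y, |w y| ≤ dist y x₀ := fun y => by
    simpa [hw₀, Real.dist_eq] using hw.dist_le_mul y x₀
  refine IsBigO.of_bound (2 ^ (2 * K + 4) * C + M) ?_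
  rw [eventually_nhdsWithin_iff, eventually_nhds_iff_ball]
  refine ⟨min (ε / 2) 1, by positivity, fun y hy hwy => ?_⟩
  have hyε : dist y x₀ < ε / 2 := lt_of_lt_of_le hy (min_le_left _ _)
  have hsub : closedBall y (|w y| / 2) ⊆ ball x₀ ε := fun z hz => by
    have := dist_triangle z y x₀
    have := hwx y
    rw [mem_closedBall] at hz
    rw [mem_ball]
    linarith
  rw [norm_pow, Real.norm_eq_abs]
  refine norm_fderiv_le_mul_pow_of_norm_le_mul_pow hF hw hC.le hwy
    ((hwx y).trans (lt_of_lt_of_le hy (min_le_right _ _)).le)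
    (fun z hz hwz => ?_) (fun z hz => (hball z (hsub hz)).2.le)
  simpa [norm_pow] using (hball z (hsub hz)).1 hwz

theorem isFlatAlong_iteratedFDeriv {w : E → ℝ} {g : E → G} {x₀ : E} (h : IsFlatAlong w g x₀)
    (hw : LipschitzWith 1 w) (hw₀ : w x₀ = 0) (hg : ContDiff ℝ ∞ g) (m : ℕ) :
    IsFlatAlong w (iteratedFDeriv ℝ m g) x₀ := by
  induction m with
  | zero => exact fun K => ((h K).norm_left.congr_left fun x => by simp).of_norm_left
  | succ m ih =>
    have hD := isFlatAlong_fderiv ih hw hw₀ (hg.iteratedFDeriv_right (WithTop.coe_le_coe.2 le_top))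
    exact fun K => ((hD K).norm_left.congr_left fun x => norm_fderiv_iteratedFDeriv).of_norm_left

end Flatness

theorem Function.Periodic.abs_le_mul_pow_of_abs_iteratedDeriv_le {φ : ℝ → ℝ} {T M : ℝ}
    (K : ℕ) (hφ : ContDiff ℝ K φ) (hper : Function.Periodic φ T) (hT : 0 < T)
    (hzero : ∃ z, φ z = 0) (hM : ∀ x, |iteratedDeriv K φ x| ≤ M) (x : ℝ) :
    |φ x| ≤ M * T ^ K := by
  induction K generalizing φ M x with
  | zero => simpa using hM x
  | succ K ih =>
    have hper' : Function.Periodic (deriv φ) T := fun y => by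
      rw [← deriv_comp_add_const, hper.funext]
    obtain ⟨c, -, hc⟩ :=
      exists_deriv_eq_zero hT hφ.continuous.continuousOn (by simpa using (hper 0).symm)
    have hderiv : ∀ y, |deriv φ y| ≤ M * T ^ K :=
      ih hφ.deriv' hper' ⟨c, hc⟩ (by simpa [iteratedDeriv_succ'] using hM)
    obtain ⟨z, hz⟩ := hzero
    obtain ⟨y, hy, hxy⟩ := hper.exists_mem_Ico hT x z
    have hmvt := convex_univ.norm_image_sub_le_of_norm_deriv_le
      (fun t _ => hφ.differentiable (by simp) t) (fun t _ => hderiv t) (mem_univ z) (mem_univ y)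
    rw [hxy, ← sub_zero (φ y), ← hz]
    calc |φ y - φ z| ≤ M * T ^ K * |y - z| := hmvt
      _ ≤ M * T ^ K * T := by
          gcongr
          · exact (abs_nonneg _).trans (hderiv 0)
          · rw [abs_of_nonneg] <;> linarith [hy.1, hy.2]
      _ = M * T ^ (K + 1) := by ring

theorem norm_iteratedDeriv_comp_add_smul_le {E F : Type*} [NormedAddCommGroup E]
    [NormedSpace ℝ E] [NormedAddCommGroup F] [NormedSpace ℝ F] {f : E → F} {n : WithTop ℕ∞}
    {K : ℕ} (hf : ContDiff ℝ n f) (hK : K ≤ n) (x v : E) (t : ℝ) :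
    ‖iteratedDeriv K (fun s : ℝ => f (x + s • v)) t‖ ≤
      ‖iteratedFDeriv ℝ K f (x + t • v)‖ * ‖v‖ ^ K := by
  have hcomp : (fun s : ℝ => f (x + s • v)) =
      (fun y => f (y + x)) ∘ ContinuousLinearMap.toSpanSingleton ℝ v := by
    ext s; simp [add_comm]
  have hfx : ContDiff ℝ n fun y => f (y + x) := hf.comp (contDiff_id.add contDiff_const)
  rw [← norm_iteratedFDeriv_eq_norm_iteratedDeriv, hcomp,
    ContinuousLinearMap.iteratedFDeriv_comp_right _ hfx _ hK, iteratedFDeriv_comp_add_right]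
  refine (ContinuousMultilinearMap.norm_compContinuousLinearMap_le _ _).trans ?_
  simp [add_comm]

theorem abs_le_mul_pow_of_add_snd_invariant {g : ℝ × ℝ → ℝ} {K : ℕ} {M : ℝ}
    (hg : ContDiff ℝ K g) (hinv : ∀ p q : ℝ, g (p + q, q) = g (p, q))
    (h0 : ∀ q, g (0, q) = 0)
    (hM : ∀ x ∈ Icc (-1 : ℝ) 1 ×ˢ Icc (-1 : ℝ) 1, ‖iteratedFDeriv ℝ K g x‖ ≤ M)
    {p q : ℝ} (hq : q ≠ 0) (hq1 : |q| ≤ 1) : |g (p, q)| ≤ M * |q| ^ K := by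
  set φ : ℝ → ℝ := fun s => g ((0, q) + s • (1, 0))
  have hφ : ∀ s, φ s = g (s, q) := fun s => by simp [φ]
  have hperq : Function.Periodic φ q := fun s => by rw [hφ, hφ, hinv]
  have hper : Function.Periodic φ |q| := by
    rcases abs_cases q with ⟨h, -⟩ | ⟨h, -⟩ <;> rw [h]
    exacts [hperq, hperq.neg]
  have hperK : Function.Periodic (iteratedDeriv K φ) |q| := fun s => by
    rw [← congrFun (iteratedDeriv_comp_add_const K φ |q|) s, hper.funext]
  have hderiv : ∀ s, |iteratedDeriv K φ s| ≤ M := fun s => by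
    obtain ⟨s', hs', hss'⟩ := hperK.exists_mem_Ico (abs_pos.2 hq) s 0
    rw [hss', ← Real.norm_eq_abs]
    refine (norm_iteratedDeriv_comp_add_smul_le hg le_rfl _ _ _).trans ?_
    have hq' := abs_le.1 hq1
    simpa using hM (s', q) ⟨⟨by linarith [hs'.1], by linarith [hs'.2]⟩, hq'.1, hq'.2⟩
  simpa [hφ] using hper.abs_le_mul_pow_of_abs_iteratedDeriv_le K (by fun_prop)
    (abs_pos.2 hq) ⟨0, by simp [φ, h0]⟩ hderiv p

theorem isFlatAlong_snd_of_add_snd_invariant {g : ℝ × ℝ → ℝ} (hg : ContDiff ℝ ∞ g)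
    (hinv : ∀ p q : ℝ, g (p + q, q) = g (p, q)) (h0 : ∀ q, g (0, q) = 0) (p₀ : ℝ) :
    IsFlatAlong Prod.snd g (p₀, 0) := by
  intro K
  have hgK : ContDiff ℝ K g := hg.of_le (WithTop.coe_le_coe.2 le_top)
  obtain ⟨M, hM⟩ := (isCompact_Icc.prod isCompact_Icc).exists_bound_of_continuousOn
    (hgK.continuous_iteratedFDeriv le_rfl).continuousOn
  refine IsBigO.of_bound M ?_
  rw [eventually_nhdsWithin_iff, eventually_nhds_iff_ball]
  refine ⟨1, one_pos, fun x hx hx2 => ?_⟩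
  have hx1 : |x.2| ≤ 1 := by
    have hdist : dist x (p₀, 0) < 1 := hx
    rw [Prod.dist_eq, max_lt_iff] at hdist
    simpa [Real.dist_eq] using hdist.2.le
  simpa using abs_le_mul_pow_of_add_snd_invariant hgK hinv h0 hM hx2 hx1 (p := x.1)

theorem stmt1 (f : ℝ × ℝ → ℝ) (hf : ContDiff ℝ (⊤ : ℕ∞) f)
    (hinv : ∀ (n : ℤ) (p q : ℝ), f (p + n * q, q) = f (p, q)) :
    ∃ g : ℝ × ℝ → ℝ, ContDiff ℝ (⊤ : ℕ∞) g ∧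
      (∀ (n : ℤ) (p q : ℝ), g (p + n * q, q) = g (p, q)) ∧
      (∀ p q : ℝ, f (p, q) = f (0, q) + g (p, q)) ∧
      (∀ (m : ℕ) (p : ℝ), iteratedFDeriv ℝ m g (p, 0) = 0) := by
  set g : ℝ × ℝ → ℝ := fun x => f x - f (0, x.2)
  have hg : ContDiff ℝ ∞ g := hf.sub (hf.comp (contDiff_const.prodMk contDiff_snd))
  have hginv : ∀ (n : ℤ) (p q : ℝ), g (p + n * q, q) = g (p, q) := fun n p q => by
    simp only [g, hinv]
  refine ⟨g, hg, hginv, fun p q => by simp [g], fun m p => ?_⟩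
  have hflat := isFlatAlong_snd_of_add_snd_invariant hg (fun p q => by simpa using hginv 1 p q)
    (fun q => sub_self _) p
  have hdense : Dense {x : ℝ × ℝ | x.2 ≠ 0} :=
    (dense_compl_singleton (0 : ℝ)).preimage (isOpenMap_snd (X := ℝ))
  exact (isFlatAlong_iteratedFDeriv hflat LipschitzWith.prod_snd rfl hg m).eq_zero
    (hg.continuous_iteratedFDeriv (WithTop.coe_le_coe.2 le_top)).continuousAt
    continuous_snd.continuousAt rfl (hdense.closure_eq ▸ mem_univ _)
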